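/- arXiv:math/9905115 — 5 statements merged into one kernel-verified Lean document; each statement's English description precedes it below -/
import Mathlib

section
/- The collection S = {X ⊆ 2^ω : no Borel image of X is a splitting family} is a σ-ideal on the Cantor space: if X ∈ S and Y ⊆ X then Y ∈ S, and if X_n ∈ S for every n ∈ ω then ⋃_{n∈ω} X_n ∈ S. -/
/-- Identify an element of the Cantor space `ℕ → Bool` with a subset of `ℕ`. -/
def toSet (x : ℕ → Bool) : Set ℕ := {n | x n = true}

/-- A family `𝒜` of subsets of `ω` is a splitting family if every infinite `B ⊆ ω`
is split by some member of `𝒜`. -/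
def IsSplitting (𝒜 : Set (Set ℕ)) : Prop :=
  ∀ B : Set ℕ, B.Infinite → ∃ A ∈ 𝒜, (A ∩ B).Infinite ∧ (B \ A).Infinite

/-- `S` = the collection of sets `X ⊆ 2^ω` no Borel image of which is a splitting family. -/
def SIdeal : Set (Set (ℕ → Bool)) :=
  {X | ∀ f : (ℕ → Bool) → (ℕ → Bool), Measurable f → ¬ IsSplitting (toSet '' (f '' X))}

/-!
Fix a Borel `f`. If `X ∈ S` and `B ⊆ ω` is infinite, enumerate `B` by `e : ω → B`; the map
`x ↦ f x ∘ e` is again Borel, so some infinite `C` is split by no `e⁻¹(f x)`, `x ∈ X`, and then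
`e(C) ⊆ B` is split by no `f x`. For `⋃ₙ Xₙ` this yields a decreasing sequence of infinite sets
`Bₙ` with `Bₙ₊₁` unsplit by `f(Xₙ)`; a diagonal pseudo-intersection `D` of the `Bₙ` is unsplit by
every `f x`, since being unsplit passes to almost-subsets.
-/

open Set Function

section Splits

variable {α β : Type*}

def Splits (A B : Set α) : Prop := (A ∩ B).Infinite ∧ (B \ A).Infinite

lemma Splits.of_diff_finite {A B D : Set α} (h : Splits A D) (hDB : (D \ B).Finite) :
    Splits A B := by
  refine ⟨(h.1.sdiff hDB).mono ?_, (h.2.sdiff hDB).mono ?_⟩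
  · rintro m ⟨⟨hmA, hmD⟩, hmDB⟩
    exact ⟨hmA, by_contra fun hmB => hmDB ⟨hmD, hmB⟩⟩
  · rintro m ⟨⟨hmD, hmA⟩, hmDB⟩
    exact ⟨by_contra fun hmB => hmDB ⟨hmD, hmB⟩, hmA⟩

lemma splits_image_iff {e : α → β} (he : Injective e) {A : Set β} {C : Set α} :
    Splits A (e '' C) ↔ Splits (e ⁻¹' A) C := by
  rw [Splits, Splits, inter_comm, ← image_inter_preimage, ← image_sdiff_preimage,
    infinite_image_iff he.injOn, infinite_image_iff he.injOn, inter_comm]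

end Splits

lemma not_isSplitting_iff {𝒜 : Set (Set ℕ)} :
    ¬ IsSplitting 𝒜 ↔ ∃ B : Set ℕ, B.Infinite ∧ ∀ A ∈ 𝒜, ¬ Splits A B := by
  simp only [IsSplitting, Splits]
  push Not
  rfl

lemma IsSplitting.mono {𝒜 ℬ : Set (Set ℕ)} (h : 𝒜 ⊆ ℬ) (h𝒜 : IsSplitting 𝒜) :
    IsSplitting ℬ := fun B hB =>
  let ⟨A, hA, hAB⟩ := h𝒜 B hB
  ⟨A, h hA, hAB⟩

lemma exists_subset_forall_not_splits_of_mem_SIdeal {X : Set (ℕ → Bool)} (hX : X ∈ SIdeal)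
    {f : (ℕ → Bool) → (ℕ → Bool)} (hf : Measurable f) {B : Set ℕ} (hB : B.Infinite) :
    ∃ B' ⊆ B, B'.Infinite ∧ ∀ x ∈ X, ¬ Splits (toSet (f x)) B' := by
  set e : ℕ → ℕ := fun k => hB.natEmbedding B k
  have he : Injective e := Subtype.val_injective.comp (hB.natEmbedding B).injective
  have hg : Measurable fun x => f x ∘ e :=
    measurable_pi_lambda _ fun k => (measurable_pi_apply (e k)).comp hf
  obtain ⟨C, hC, hCunsplit⟩ := not_isSplitting_iff.1 (hX _ hg)
  refine ⟨e '' C, ?_, hC.image he.injOn, fun x hx => ?_⟩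
  · rintro _ ⟨k, -, rfl⟩
    exact (hB.natEmbedding B k).2
  · rw [splits_image_iff he]
    exact hCunsplit _ ⟨_, ⟨x, hx, rfl⟩, rfl⟩

lemma exists_infinite_forall_diff_finite_of_antitone {B : ℕ → Set ℕ} (hB : Antitone B)
    (hBinf : ∀ n, (B n).Infinite) : ∃ D : Set ℕ, D.Infinite ∧ ∀ n, (D \ B n).Finite := by
  choose d hdB hd using fun n => (hBinf n).exists_gt n
  refine ⟨range d, infinite_of_forall_exists_gt fun n => ⟨d n, mem_range_self n, hd n⟩,
    fun n => ((finite_Iio n).image d).subset ?_⟩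
  rintro _ ⟨⟨k, rfl⟩, hkn⟩
  refine ⟨k, by_contra fun hnk => ?_, rfl⟩
  simp only [mem_Iio, not_lt] at hnk
  exact hkn (hB hnk (hdB k))

lemma exists_infinite_forall_diff_finite {P : ℕ → Set ℕ → Prop}
    (hP : ∀ n (B : Set ℕ), B.Infinite → ∃ B' ⊆ B, B'.Infinite ∧ P n B') :
    ∃ D : Set ℕ, D.Infinite ∧ ∀ n, ∃ B, P n B ∧ (D \ B).Finite := by
  choose F hFB hFinf hFP using hP
  let B : ℕ → {B : Set ℕ // B.Infinite} := fun n =>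
    Nat.rec ⟨univ, infinite_univ⟩ (fun n B => ⟨F n B.1 B.2, hFinf n B.1 B.2⟩) n
  have hB : Antitone fun n => (B n).1 :=
    antitone_nat_of_succ_le fun n => hFB n (B n).1 (B n).2
  obtain ⟨D, hD, hDB⟩ :=
    exists_infinite_forall_diff_finite_of_antitone hB fun n => (B n).2
  exact ⟨D, hD, fun n => ⟨(B (n + 1)).1, hFP n (B n).1 (B n).2, hDB (n + 1)⟩⟩

/-- `S` is a σ-ideal: it is closed under subsets and countable unions. -/
theorem SIdeal_sigmaIdeal :
    (∀ X Y : Set (ℕ → Bool), X ∈ SIdeal → Y ⊆ X → Y ∈ SIdeal) ∧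
    (∀ X : ℕ → Set (ℕ → Bool), (∀ n, X n ∈ SIdeal) → (⋃ n, X n) ∈ SIdeal) := by
  refine ⟨fun X Y hX hYX f hf hY => hX f hf (hY.mono ?_), fun X hX f hf hsplit => ?_⟩
  · exact image_mono (image_mono hYX)
  obtain ⟨D, hD, hDB⟩ := exists_infinite_forall_diff_finite fun n _ hB =>
    exists_subset_forall_not_splits_of_mem_SIdeal (hX n) hf hB
  obtain ⟨_, ⟨_, ⟨x, hx, rfl⟩, rfl⟩, hxD⟩ := hsplit D hD
  obtain ⟨n, hxn⟩ := mem_iUnion.1 hx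
  obtain ⟨B, hB, hDBn⟩ := hDB n
  exact hB x hxn (Splits.of_diff_finite hxD hDBn)
end

section
/- For every strictly increasing g : ω → ω, the function S_g : dom(S_g) → 2^ω defined by S_g(x) = z_{ℓ(x),g} is continuous on its domain (with the subspace topology of 2^ω). -/
/-!
Whether `m ∈ ℓ(x)` is decided by the first `|ℓ⁻¹(m)|` bits of `x`, so every `y` close enough
to `x` has `ℓ(y) ∩ [0, v] = ℓ(x) ∩ [0, v]`. On the other hand the `n`-th bit of `z_{A,g}` only
depends on `A ∩ [0, x_n]`: both the index `n` of `x_n` in `range g ∩ A` and the parity of the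
index of `x_n` in `A` are counts below `x_n`. Hence every coordinate of `S_g` is locally
constant on `dom(S_g)`.
-/

/-- For a bijection `ℓ : 2^{<ω} → ω` and `x ∈ 2^ω`, the set
`ℓ(x) = {ℓ(x↾n) : n ∈ ω} ⊆ ω`. -/
def ellSet (ℓ : List Bool ≃ ℕ) (x : ℕ → Bool) : Set ℕ :=
  {m | ∃ n : ℕ, ℓ (List.ofFn fun i : Fin n => x i) = m}

/-- `A_+`: the elements of `A` of even index in the increasing enumeration of `A`. -/
def Aplus (A : Set ℕ) : Set ℕ := {m | ∃ k : ℕ, Even k ∧ Nat.nth (· ∈ A) k = m}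

open Classical in
/-- The real `z_{A,g} ∈ 2^ω`: writing `range(g) ∩ A = {x_0 < x_1 < ⋯}`,
`z_{A,g}(n) = 1` iff `x_n ∈ A_+`. -/
noncomputable def zAg (A : Set ℕ) (g : ℕ → ℕ) : ℕ → Bool := fun n =>
  if Nat.nth (· ∈ Set.range g ∩ A) n ∈ Aplus A then true else false

/-- The map `S_g(x) = z_{ℓ(x),g}`. -/
noncomputable def Sg (ℓ : List Bool ≃ ℕ) (g : ℕ → ℕ) (x : ℕ → Bool) : ℕ → Bool :=
  zAg (ellSet ℓ x) g

open Filter Topology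

namespace Nat

theorem count_congr_of_forall_lt {p q : ℕ → Prop} [DecidablePred p] [DecidablePred q] {v : ℕ}
    (h : ∀ k < v, p k ↔ q k) : count p v = count q v :=
  (count_mono_left fun k hk => (h k hk).1).antisymm (count_mono_left fun k hk => (h k hk).2)

theorem nth_eq_of_forall_le_iff {p q : ℕ → Prop} (hp : (Set.ofPred p).Infinite) {n : ℕ}
    (h : ∀ k ≤ nth p n, p k ↔ q k) : nth q n = nth p n := by
  classical
  have hq : q (nth p n) := (h _ le_rfl).1 (nth_mem_of_infinite hp n)
  calc nth q n = nth q (count q (nth p n)) := by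
        rw [← count_congr_of_forall_lt fun k hk => h k hk.le, count_nth_of_infinite hp]
    _ = nth p n := nth_count hq

end Nat

open scoped Classical in
theorem mem_Aplus_iff {A : Set ℕ} (hA : A.Infinite) {v : ℕ} (hv : v ∈ A) :
    v ∈ Aplus A ↔ Even (Nat.count (· ∈ A) v) := by
  constructor
  · rintro ⟨k, hk, rfl⟩
    rwa [Nat.count_nth_of_infinite (p := (· ∈ A)) hA]
  · exact fun h => ⟨_, h, Nat.nth_count hv⟩

theorem zAg_congr_of_forall_le_iff {A B : Set ℕ} {g : ℕ → ℕ} (hA : A.Infinite) (hB : B.Infinite)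
    (hgA : (Set.range g ∩ A).Infinite) {n : ℕ}
    (h : ∀ k ≤ Nat.nth (· ∈ Set.range g ∩ A) n, k ∈ A ↔ k ∈ B) : zAg B g n = zAg A g n := by
  classical
  set v := Nat.nth (· ∈ Set.range g ∩ A) n
  have hvA : v ∈ A := (Nat.nth_mem_of_infinite hgA n).2
  have hnth : Nat.nth (· ∈ Set.range g ∩ B) n = v :=
    Nat.nth_eq_of_forall_le_iff hgA fun k hk => and_congr_right' (h k hk)
  have hplus : v ∈ Aplus B ↔ v ∈ Aplus A := by
    rw [mem_Aplus_iff hB ((h v le_rfl).1 hvA), mem_Aplus_iff hA hvA,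
      Nat.count_congr_of_forall_lt fun k hk => (h k hk.le).symm]
  simp only [zAg, hnth, hplus, v]

theorem mem_ellSet_iff {ℓ : List Bool ≃ ℕ} {x : ℕ → Bool} {m : ℕ} :
    m ∈ ellSet ℓ x ↔ (List.ofFn fun i : Fin (ℓ.symm m).length => x i) = ℓ.symm m := by
  constructor
  · rintro ⟨n, rfl⟩
    simp
  · exact fun h => ⟨_, by rw [h, Equiv.apply_symm_apply]⟩

theorem ellSet_infinite (ℓ : List Bool ≃ ℕ) (x : ℕ → Bool) : (ellSet ℓ x).Infinite := by
  refine Set.infinite_range_of_injective fun a b hab => ?_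
  simpa using congrArg List.length (ℓ.injective hab)

theorem eventually_mem_ellSet_iff (ℓ : List Bool ≃ ℕ) (x : ℕ → Bool) (v : ℕ) :
    ∀ᶠ y in 𝓝 x, ∀ k ≤ v, k ∈ ellSet ℓ y ↔ k ∈ ellSet ℓ x := by
  set K := (Finset.range (v + 1)).sup fun m => (ℓ.symm m).length
  filter_upwards [(PiNat.isOpen_cylinder _ x K).mem_nhds (PiNat.self_mem_cylinder x K)]
    with y hy k hk
  have hlen : (ℓ.symm k).length ≤ K :=
    Finset.le_sup (f := fun m => (ℓ.symm m).length) (Finset.mem_range_succ_iff.2 hk)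
  have hxy : (fun i : Fin (ℓ.symm k).length => y i) = fun i : Fin _ => x i :=
    funext fun i => PiNat.mem_cylinder_iff.1 hy i (i.isLt.trans_le hlen)
  rw [mem_ellSet_iff, mem_ellSet_iff, hxy]

theorem Sg_continuousOn_general (ℓ : List Bool ≃ ℕ) (g : ℕ → ℕ) :
    ContinuousOn (Sg ℓ g) {x : ℕ → Bool | (Set.range g ∩ ellSet ℓ x).Infinite} := by
  intro x hx
  refine (continuousAt_pi.2 fun n => EventuallyEq.continuousAt (y := Sg ℓ g x n) ?_)
    |>.continuousWithinAt
  filter_upwards [eventually_mem_ellSet_iff ℓ x (Nat.nth (· ∈ Set.range g ∩ ellSet ℓ x) n)]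
    with y hy
  exact zAg_congr_of_forall_le_iff (ellSet_infinite ℓ x) (ellSet_infinite ℓ y) hx
    fun k hk => (hy k hk).symm

/-- For strictly increasing `g`, the map `S_g` is continuous on its domain
`dom(S_g) = {x : range(g) ∩ ℓ(x) infinite}`. -/
theorem Sg_continuousOn (ℓ : List Bool ≃ ℕ) (g : ℕ → ℕ) (hg : StrictMono g) :
    ContinuousOn (Sg ℓ g) {x : ℕ → Bool | (Set.range g ∩ ellSet ℓ x).Infinite} :=
  Sg_continuousOn_general ℓ g
end

section
/- Every non-meager subset X of the Cantor space 2^ω is a splitting family: for every infinite A ⊆ ω there exists z ∈ X (viewed as a subset of ω via characteristic functions) such that both z ∩ A and A ∖ z are infinite. -/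
lemma constTail_meagre (A : Set ℕ) (hA : A.Infinite) (b : Bool) :
    IsMeagre {z : ℕ → Bool | ∃ n, ∀ m ∈ A, n ≤ m → z m = b} := by
  have : {z : ℕ → Bool | ∃ n, ∀ m ∈ A, n ≤ m → z m = b}
      = ⋃ n, {z : ℕ → Bool | ∀ m ∈ A, n ≤ m → z m = b} := by
    ext z; simp [Set.mem_iUnion]
  rw [this]
  apply isMeagre_iUnion
  intro n
  set C : Set (ℕ → Bool) := {z : ℕ → Bool | ∀ m ∈ A, n ≤ m → z m = b} with hC
  have hclosed : IsClosed C := by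
    have : C = ⋂ m ∈ {m | m ∈ A ∧ n ≤ m}, (fun z : ℕ → Bool => z m) ⁻¹' {b} := by
      ext z; simp [hC]
    rw [this]
    exact isClosed_biInter fun m _ =>
      (isClosed_discrete {b}).preimage (continuous_apply m)
  -- C is nowhere dense: its interior is empty
  have hint : interior C = ∅ := by
    by_contra h
    obtain ⟨z, hz⟩ := Set.nonempty_iff_ne_empty.mpr h
    obtain ⟨I, u, hu, hsub⟩ := (isOpen_pi_iff.mp isOpen_interior) z hz
    -- pick m ∈ A with n ≤ m and m ∉ I
    have hinf : (A \ ↑(I ∪ Finset.range n)).Infinite :=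
      hA.diff (Finset.finite_toSet _)
    obtain ⟨m, hmA, hmI⟩ := hinf.nonempty
    simp only [Finset.coe_union, Set.mem_union, Finset.mem_coe, Finset.coe_range,
      Set.mem_Iio, not_or, not_lt] at hmI
    set w : ℕ → Bool := Function.update z m (!b) with hw
    have hwmem : w ∈ (I : Set ℕ).pi u := by
      intro i hi
      have : w i = z i := Function.update_of_ne (by rintro rfl; exact hmI.1 hi) _ _
      rw [this]
      exact (hu i hi).2
    have hwC : w ∈ C := interior_subset (hsub hwmem)
    have : w m = b := hwC m hmA hmI.2
    simp [hw, Function.update_self] at this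
  -- conclude meagre
  rw [isMeagre_iff_countable_union_isNowhereDense]
  exact ⟨{C}, by simpa [IsNowhereDense, hclosed.closure_eq] using hint,
    Set.countable_singleton _, by simp⟩

/-- Every non-meager subset of the Cantor space is a splitting family. -/
theorem nonmeager_is_splitting (X : Set (ℕ → Bool)) (hX : ¬ IsMeagre X) :
    ∀ A : Set ℕ, A.Infinite →
      ∃ z ∈ X, (toSet z ∩ A).Infinite ∧ (A \ toSet z).Infinite := by
  intro A hA
  set B : Set (ℕ → Bool) :=
    {z | ∃ n, ∀ m ∈ A, n ≤ m → z m = false} ∪ {z | ∃ n, ∀ m ∈ A, n ≤ m → z m = true}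
  have hB : IsMeagre B := by
    rw [IsMeagre, Set.compl_union]
    exact Filter.inter_mem (constTail_meagre A hA false) (constTail_meagre A hA true)
  have hne : (X \ B).Nonempty := by
    rw [Set.nonempty_iff_ne_empty]
    intro h
    exact hX (hB.mono (by rw [Set.diff_eq_empty] at h; exact h))
  obtain ⟨z, hzX, hzB⟩ := hne
  simp only [B, Set.mem_union, not_or, Set.mem_setOf_eq, not_exists] at hzB
  refine ⟨z, hzX, ?_, ?_⟩
  · intro hfin
    apply hzB.1 ((hfin.image id).toFinset.sup id + 1)
    intro m hmA hm
    by_contra hne'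
    have hmem : m ∈ toSet z ∩ A := ⟨by simpa [toSet] using hne', hmA⟩
    have : m ≤ (hfin.image id).toFinset.sup id :=
      Finset.le_sup (f := id) ((Set.Finite.mem_toFinset _).mpr ⟨m, hmem, rfl⟩)
    omega
  · intro hfin
    apply hzB.2 ((hfin.image id).toFinset.sup id + 1)
    intro m hmA hm
    by_contra hne'
    have hmem : m ∈ A \ toSet z := ⟨hmA, by simpa [toSet] using hne'⟩
    have : m ≤ (hfin.image id).toFinset.sup id :=
      Finset.le_sup (f := id) ((Set.Finite.mem_toFinset _).mpr ⟨m, hmem, rfl⟩)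
    omega
end

section
/- Every Luzin set is a splitting family: if X ⊆ 2^ω is an uncountable set such that F ∩ X is countable for every meager F ⊆ 2^ω, then (identifying elements of 2^ω with subsets of ω via characteristic functions) for every infinite A ⊆ ω there exists z ∈ X such that both z ∩ A and A ∖ z are infinite. -/
lemma constSet_nowhereDense (A : Set ℕ) (hA : A.Infinite) (n : ℕ) (b : Bool) :
    IsNowhereDense {z : ℕ → Bool | ∀ m ∈ A, n ≤ m → z m = b} := by
  set S : Set (ℕ → Bool) := {z : ℕ → Bool | ∀ m ∈ A, n ≤ m → z m = b} with hS
  have hclosed : IsClosed S := by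
    have : S = ⋂ m ∈ A, ⋂ (_ : n ≤ m), {z : ℕ → Bool | z m = b} := by
      ext z; simp [hS]
    rw [this]
    exact isClosed_biInter fun m _ => isClosed_iInter fun _ =>
      isClosed_eq (continuous_apply m) continuous_const
  rw [hclosed.isNowhereDense_iff]
  rw [Set.eq_empty_iff_forall_notMem]
  intro x hx
  obtain ⟨I, u, hu, hsub⟩ := isOpen_pi_iff.mp isOpen_interior x hx
  -- pick m ∈ A with m ≥ n and m ∉ I
  obtain ⟨m, hmA, hm⟩ := hA.exists_gt (max n (I.sup id))
  have hmn : n ≤ m := le_of_lt (lt_of_le_of_lt (le_max_left _ _) hm)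
  have hmI : m ∉ I := fun h =>
    absurd (Finset.le_sup (f := id) h) (not_le.mpr (lt_of_le_of_lt (le_max_right n _) hm))
  have hy : Function.update x m (!b) ∈ (I : Set ℕ).pi u := by
    intro i hi
    rw [Function.update_of_ne (by rintro rfl; exact hmI hi)]
    exact (hu i hi).2
  have := interior_subset (hsub hy)
  have := this m hmA hmn
  simp [Function.update_self] at this

/-- Every Luzin set is a splitting family: if `X ⊆ 2^ω` is uncountable and meets
every meager set in a countable set, then for every infinite `A ⊆ ω` there is
`z ∈ X` splitting `A`. -/
theorem luzin_is_splitting (X : Set (ℕ → Bool)) (hX : ¬ X.Countable)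
    (hLuzin : ∀ F : Set (ℕ → Bool), IsMeagre F → (F ∩ X).Countable) :
    ∀ A : Set ℕ, A.Infinite →
      ∃ z ∈ X, (toSet z ∩ A).Infinite ∧ (A \ toSet z).Infinite := by
  intro A hA
  set S : ℕ → Bool → Set (ℕ → Bool) :=
    fun n b => {z : ℕ → Bool | ∀ m ∈ A, n ≤ m → z m = b} with hSdef
  have hSmeagre : ∀ n b, IsMeagre (S n b) := by
    intro n b
    rw [isMeagre_iff_countable_union_isNowhereDense]
    exact ⟨{S n b}, by simpa using constSet_nowhereDense A hA n b,
      Set.countable_singleton _, by simp⟩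
  set F : Set (ℕ → Bool) := ⋃ n, (S n false ∪ S n true) with hFdef
  have hF : IsMeagre F :=
    isMeagre_iUnion fun n => by
      rw [isMeagre_iff_countable_union_isNowhereDense]
      exact ⟨{S n false, S n true}, by
        simp only [Set.mem_insert_iff, Set.mem_singleton_iff]
        rintro t (rfl | rfl) <;> first
          | exact constSet_nowhereDense A hA n false
          | exact constSet_nowhereDense A hA n true,
        (Set.countable_singleton _).insert _, by simp⟩
  have hcnt := hLuzin F hF
  have : ∃ z ∈ X, z ∉ F := by
    by_contra h
    push_neg at h
    exact hX (hcnt.mono fun z hz => Set.mem_inter (h z hz) hz)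
  obtain ⟨z, hzX, hzF⟩ := this
  refine ⟨z, hzX, ?_, ?_⟩
  · by_contra hfin
    rw [Set.not_infinite] at hfin
    obtain ⟨N, hN⟩ : ∃ N, ∀ m ∈ toSet z ∩ A, m < N := by
      obtain ⟨N, hN⟩ := hfin.bddAbove
      exact ⟨N + 1, fun m hm => Nat.lt_succ_of_le (hN hm)⟩
    refine hzF (Set.mem_iUnion.mpr ⟨N, Or.inl ?_⟩)
    intro m hmA hNm
    by_contra hz
    have : z m = true := by cases h : z m <;> simp_all
    exact absurd hNm (not_le.mpr (hN m ⟨this, hmA⟩))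
  · by_contra hfin
    rw [Set.not_infinite] at hfin
    obtain ⟨N, hN⟩ : ∃ N, ∀ m ∈ A \ toSet z, m < N := by
      obtain ⟨N, hN⟩ := hfin.bddAbove
      exact ⟨N + 1, fun m hm => Nat.lt_succ_of_le (hN hm)⟩
    refine hzF (Set.mem_iUnion.mpr ⟨N, Or.inr ?_⟩)
    intro m hmA hNm
    by_contra hz
    have hzm : z m = false := by cases h : z m <;> simp_all
    have : m ∈ A \ toSet z := ⟨hmA, by simp [toSet, hzm]⟩
    exact absurd hNm (not_le.mpr (hN m this))
end

section
/- Let D be a dense open subset of the Hechler partial order 𝐃, and let R ⊆ Seq* be the smallest set satisfying: (i) s ∈ R whenever there exists a strictly increasing f : ω → ω extending s with (s,f) ∈ D; (ii) s ∈ R whenever there exist m ∈ ω and a sequence ⟨s_k : k ∈ ω⟩ of elements of Seq* of length m such that for every k, s ⊆ s_k, s_k(|s|) > k, and s_k ∈ R. Then R = Seq*; that is, the rank rank_D(s) is defined for every s ∈ Seq*. -/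
/-- `Seq*`: strictly increasing finite sequences of natural numbers. -/
def SeqStar : Set (List ℕ) := {s | s.Chain' (· < ·)}

/-- The Hechler forcing `𝐃`: pairs `(s, f)` with `s ∈ Seq*`, `f` strictly
increasing, and `s ⊆ f`. -/
def HechlerD : Set (List ℕ × (ℕ → ℕ)) :=
  {p | p.1 ∈ SeqStar ∧ StrictMono p.2 ∧ ∀ i, (h : i < p.1.length) → p.1.get ⟨i, h⟩ = p.2 i}

/-- `HechlerExt p q` means `q ≥ p`, i.e. `q` extends `p`: `q.1 ⊇ p.1` (end
extension) and `q.2 n ≥ p.2 n` for all `n`. -/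
def HechlerExt (p q : List ℕ × (ℕ → ℕ)) : Prop :=
  p.1 <+: q.1 ∧ ∀ n, p.2 n ≤ q.2 n

/-!
Suppose `s ∉ R`. By rule (ii), for every `t ∈ Seq* \ R` and every `m > |t|` the values `u(|t|)`
of the members `u ∈ R` of length `m` extending `t` are bounded. Fix `m`, and consider a branch
`g` whose initial segments of lengths in `[|s|, m)` lie outside `R` while `g ↾ m ∈ R`: each
value `g i` (`i < m`) is then bounded in terms of `g ↾ i`, and since there are only finitely
many candidates for `g ↾ i` at each stage, `g ↾ m` is bounded by a number depending on `m`
alone. Choose `f ⊇ s` whose value at `m - 1` exceeds this number for every `m > |s|`. A condition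
`(t, g) ≤ (s, f)` in `D` has `t ∈ R` by rule (i), so there is a least `j > |s|` with `g ↾ j ∈ R`;
then `g (j - 1)` is at most the bound for `j`, although `g (j - 1) ≥ f (j - 1)` exceeds it.
-/
def initSeg (g : ℕ → ℕ) (n : ℕ) : List ℕ := (List.range n).map g

@[simp]
lemma length_initSeg (g : ℕ → ℕ) (n : ℕ) : (initSeg g n).length = n := by
  simp [initSeg]

@[simp]
lemma getElem_initSeg (g : ℕ → ℕ) {n i : ℕ} (hi : i < (initSeg g n).length) :
    (initSeg g n)[i] = g i := by
  simp [initSeg]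

lemma getD_initSeg (g : ℕ → ℕ) {n i : ℕ} (hi : i < n) : (initSeg g n).getD i 0 = g i := by
  rw [List.getD_eq_getElem _ _ (by simpa using hi), getElem_initSeg]

lemma initSeg_prefix_initSeg (g : ℕ → ℕ) {m n : ℕ} (h : m ≤ n) : initSeg g m <+: initSeg g n := by
  rw [List.prefix_iff_eq_take]
  simp [initSeg, ← List.map_take, List.take_range, Nat.min_eq_left h]

lemma initSeg_mem_seqStar {g : ℕ → ℕ} (hg : StrictMono g) (n : ℕ) : initSeg g n ∈ SeqStar := by
  refine List.isChain_iff_getElem.2 fun i hi => ?_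
  simpa using hg i.lt_succ_self

lemma eq_initSeg_of_prefix {s t : List ℕ} {g : ℕ → ℕ} (htg : (t, g) ∈ HechlerD) (hst : s <+: t) :
    s = initSeg g s.length := by
  refine List.ext_getElem (by simp) fun i hs _ => ?_
  rw [getElem_initSeg, hst.getElem hs]
  exact htg.2.2 i _

def ClosedUnderUnboundedExtensions (R : Set (List ℕ)) : Prop :=
  ∀ s ∈ SeqStar,
    (∃ m : ℕ, s.length < m ∧ ∃ sk : ℕ → List ℕ, ∀ k : ℕ,
      sk k ∈ SeqStar ∧ (sk k).length = m ∧ s <+: sk k ∧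
      k < (sk k).getD s.length 0 ∧ sk k ∈ R) → s ∈ R

def extensionValues (R : Set (List ℕ)) (t : List ℕ) (m : ℕ) : Set ℕ :=
  {x | ∃ u ∈ R, u.length = m ∧ t <+: u ∧ u.getD t.length 0 = x}

lemma bddAbove_extensionValues {R : Set (List ℕ)} (hRsub : R ⊆ SeqStar)
    (hR : ClosedUnderUnboundedExtensions R) {t : List ℕ} (ht : t ∈ SeqStar) (htR : t ∉ R)
    {m : ℕ} (hm : t.length < m) : BddAbove (extensionValues R t m) := by
  by_contra hunbdd
  choose x hx hkx using not_bddAbove_iff.1 hunbdd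
  choose u hu hlen hpre hval using hx
  exact htR <| hR t ht ⟨m, hm, u, fun k => ⟨hRsub (hu k), hlen k, hpre k, hval k ▸ hkx k, hu k⟩⟩

def boundedLists (n B : ℕ) : Finset (List ℕ) :=
  Finset.univ.image fun v : Fin n → Fin (B + 1) => List.ofFn fun i => (v i : ℕ)

lemma mem_boundedLists {t : List ℕ} {n B : ℕ} (hlen : t.length = n) (hB : ∀ x ∈ t, x ≤ B) :
    t ∈ boundedLists n B := by
  refine Finset.mem_image.2 ⟨fun i => ⟨t[i], Nat.lt_succ_of_le (hB _ (List.getElem_mem _))⟩,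
    Finset.mem_univ _, List.ext_getElem (by simp [hlen]) fun i _ _ => by simp⟩

def prefixBound (K : List ℕ → ℕ) : ℕ → ℕ
  | 0 => 0
  | n + 1 => max (prefixBound K n) ((boundedLists n (prefixBound K n)).sup K)

/-- König's lemma in quantitative form: at each length only finitely many initial segments have
entries below the bound reached so far. -/
lemma le_prefixBound (K : List ℕ → ℕ) {g : ℕ → ℕ} {n : ℕ}
    (hg : ∀ i < n, g i ≤ K (initSeg g i)) : ∀ i < n, g i ≤ prefixBound K n := by
  induction n with
  | zero => simp
  | succ n ih =>
    have ih := ih fun i hi => hg i (by omega)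
    intro i hi
    rcases Nat.lt_succ_iff_lt_or_eq.1 hi with hi | rfl
    · exact (ih i hi).trans (le_max_left _ _)
    · have hmem : initSeg g i ∈ boundedLists i (prefixBound K i) := by
        refine mem_boundedLists (length_initSeg g i) fun x hx => ?_
        obtain ⟨j, hj, rfl⟩ := List.mem_map.1 hx
        exact ih j (List.mem_range.1 hj)
      exact (hg i hi).trans ((Finset.le_sup hmem).trans (le_max_right _ _))

lemma exists_hechlerD_gt {s : List ℕ} (hs : s ∈ SeqStar) (h : ℕ → ℕ) :
    ∃ f, (s, f) ∈ HechlerD ∧ ∀ n, s.length ≤ n → h n < f n := by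
  set f : ℕ → ℕ := fun n =>
    if n < s.length then s.getD n 0 else s.sum + n + 1 + ∑ k ∈ Finset.range (n + 1), h k
  have hle_sum : ∀ n, h n ≤ ∑ k ∈ Finset.range (n + 1), h k := fun n =>
    Finset.single_le_sum (fun _ _ => Nat.zero_le _) (Finset.self_mem_range_succ n)
  have hf_mono : StrictMono f := by
    refine strictMono_nat_of_lt_succ fun n => ?_
    by_cases hn : n + 1 < s.length
    · simp only [f, hn, n.lt_succ_self.trans hn, if_true, List.getD_eq_getElem _ _ hn,
        List.getD_eq_getElem _ _ (n.lt_succ_self.trans hn)]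
      exact List.isChain_iff_getElem.1 hs n hn
    by_cases hn' : n < s.length
    · simp only [f, hn, hn', if_true, if_false, List.getD_eq_getElem _ _ hn']
      have := List.le_sum_of_mem (List.getElem_mem hn')
      omega
    · simp only [f, hn, hn', if_false, Finset.sum_range_succ _ (n + 1)]
      omega
  refine ⟨f, ⟨hs, hf_mono, fun i hi => ?_⟩, fun n hn => ?_⟩
  · simp [f, hi]
  · simp only [f, not_lt.2 hn, if_false]
    have := hle_sum n
    omega

lemma exists_least_initSeg_mem {R : Set (List ℕ)} {s t : List ℕ} {g : ℕ → ℕ}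
    (hsR : s ∉ R) (htg : (t, g) ∈ HechlerD) (hst : s <+: t) (htR : t ∈ R) :
    ∃ j, s.length < j ∧ initSeg g j ∈ R ∧ ∀ i, s.length ≤ i → i < j → initSeg g i ∉ R := by
  classical
  have hs : initSeg g s.length = s := (eq_initSeg_of_prefix htg hst).symm
  have hex : ∃ j, s.length ≤ j ∧ initSeg g j ∈ R :=
    ⟨t.length, hst.length_le, eq_initSeg_of_prefix htg List.prefix_rfl ▸ htR⟩
  obtain ⟨hsj, hjR⟩ := Nat.find_spec hex
  refine ⟨Nat.find hex, hsj.lt_of_ne fun h => hsR (hs ▸ h ▸ hjR), hjR, fun i hsi hij hiR => ?_⟩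
  exact Nat.find_min hex hij ⟨hsi, hiR⟩

noncomputable def rankBound (R : Set (List ℕ)) (s : List ℕ) (m : ℕ) (t : List ℕ) : ℕ :=
  max s.sum (sSup (extensionValues R t m))

lemma le_rankBound_initSeg {R : Set (List ℕ)} (hRsub : R ⊆ SeqStar)
    (hR : ClosedUnderUnboundedExtensions R) {s : List ℕ} {g : ℕ → ℕ} (hg : StrictMono g)
    (hs : s = initSeg g s.length) {j : ℕ} (hjR : initSeg g j ∈ R)
    (hbelow : ∀ i, s.length ≤ i → i < j → initSeg g i ∉ R) :
    ∀ i < j, g i ≤ rankBound R s j (initSeg g i) := by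
  intro i hij
  by_cases his : i < s.length
  · refine le_max_of_le_left (List.le_sum_of_mem ?_)
    rw [hs]
    simpa [initSeg] using ⟨i, his, rfl⟩
  · refine le_max_of_le_right (le_csSup ?_ ?_)
    · exact bddAbove_extensionValues hRsub hR (initSeg_mem_seqStar hg i)
        (hbelow i (not_lt.1 his) hij) (by simpa using hij)
    · exact ⟨initSeg g j, hjR, length_initSeg g j, initSeg_prefix_initSeg g hij.le,
        by rw [length_initSeg, getD_initSeg g hij]⟩

theorem rank_defined_general (D : Set (List ℕ × (ℕ → ℕ))) (hDsub : D ⊆ HechlerD)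
    (hdense : ∀ p ∈ HechlerD, ∃ q ∈ D, HechlerExt p q)
    (R : Set (List ℕ)) (hRsub : R ⊆ SeqStar)
    (h1 : ∀ s ∈ SeqStar, (∃ f : ℕ → ℕ, (s, f) ∈ HechlerD ∧ (s, f) ∈ D) → s ∈ R)
    (h2 : ∀ s ∈ SeqStar,
      (∃ m : ℕ, s.length < m ∧ ∃ sk : ℕ → List ℕ, ∀ k : ℕ,
        sk k ∈ SeqStar ∧ (sk k).length = m ∧ s <+: sk k ∧
        k < (sk k).getD s.length 0 ∧ sk k ∈ R) → s ∈ R) :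
    R = SeqStar := by
  refine hRsub.antisymm fun s hs => by_contra fun hsR => ?_
  obtain ⟨f, hf, hf_gt⟩ :=
    exists_hechlerD_gt hs fun n => prefixBound (rankBound R s (n + 1)) (n + 1)
  obtain ⟨⟨t, g⟩, htD, hst, hfg⟩ := hdense _ hf
  have htg : (t, g) ∈ HechlerD := hDsub htD
  obtain ⟨j, hsj, hjR, hbelow⟩ :=
    exists_least_initSeg_mem hsR htg hst (h1 t htg.1 ⟨g, htg, htD⟩)
  have hg_le : g (j - 1) ≤ prefixBound (rankBound R s j) j :=
    le_prefixBound _ (le_rankBound_initSeg hRsub h2 htg.2.1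
      (eq_initSeg_of_prefix htg hst) hjR hbelow) (j - 1) (by omega)
  have hf_gt : prefixBound (rankBound R s j) j < f (j - 1) := by
    simpa [Nat.sub_add_cancel (Nat.one_le_of_lt hsj)] using hf_gt (j - 1) (by omega)
  exact (hf_gt.trans_le (hfg (j - 1))).not_ge hg_le

/-- If `D ⊆ 𝐃` is dense open and `R ⊆ Seq*` is closed under the two rank-forming
rules — (i) `s ∈ R` whenever some strictly increasing `f ⊇ s` gives `(s,f) ∈ D`;
(ii) `s ∈ R` whenever there are `m > |s|` and sequences `s_k ∈ Seq* ∩ ω^m` with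
`s ⊆ s_k`, `s_k(|s|) > k` and `s_k ∈ R` for all `k` — then `R = Seq*`.
That is, `rank_D(s)` is defined for every `s ∈ Seq*`. -/
theorem rank_defined (D : Set (List ℕ × (ℕ → ℕ))) (hDsub : D ⊆ HechlerD)
    (hdense : ∀ p ∈ HechlerD, ∃ q ∈ D, HechlerExt p q)
    (hopen : ∀ p ∈ D, ∀ q ∈ HechlerD, HechlerExt p q → q ∈ D)
    (R : Set (List ℕ)) (hRsub : R ⊆ SeqStar)
    (h1 : ∀ s ∈ SeqStar, (∃ f : ℕ → ℕ, (s, f) ∈ HechlerD ∧ (s, f) ∈ D) → s ∈ R)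
    (h2 : ∀ s ∈ SeqStar,
      (∃ m : ℕ, s.length < m ∧ ∃ sk : ℕ → List ℕ, ∀ k : ℕ,
        sk k ∈ SeqStar ∧ (sk k).length = m ∧ s <+: sk k ∧
        k < (sk k).getD s.length 0 ∧ sk k ∈ R) → s ∈ R) :
    R = SeqStar :=
  rank_defined_general D hDsub hdense R hRsub h1 h2
end
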